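/- Let Y ∈ ℝ^{N×M} be a 0/1 label matrix with Y_{v,i} = 𝟙[y_v = i], where each class i has exactly c = N/M nodes. Let C ∈ ℝ^{N×M} with C_{v,i} = (1/c)·𝟙[y_v = i], and let A₂ be the 0/1 adjacency matrix of a graph where each vertex has neighborhood N₂(v). Then ‖Y − A₂C‖_F² ≤ N + (M²/N)·Σ_v Σ_{u ∈ N₂(v)} 𝟙[y_u ≠ y_v], provided each vertex's neighbor label sums satisfy Σ_{u∈N₂(v)} (1/c)𝟙[y_u = y_v] ∈ [0,1] (in particular Σᵢ Σ_{u∈N₂(v)} 𝟙[y_u = i] ≤ c suffices for the cross terms). -/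

import Mathlib

/-! Row `v` of `A₂ C` is `s / c`, where `s i` counts the neighbours of `v` with label `i`, and the
neighbourhood condition puts every `s i / c` in `[0, 1]`. For `x ∈ [0, 1]` we have `(1 - x)² ≤ 1`
on the own class and `x² ≤ x` on every other class, and the latter terms add up to `1 / c` times the
number of heterophilous neighbours of `v`. It remains to note `1 / c ≤ M / c = M² / N`. -/

open Finset

variable {n κ : Type*} [DecidableEq κ]

theorem sum_sq_indicator_sub_le [Fintype κ] (x : κ → ℝ) (j : κ)
    (hx0 : ∀ i, 0 ≤ x i) (hx1 : ∀ i, x i ≤ 1) :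
    ∑ i, ((if j = i then 1 else 0) - x i) ^ 2 ≤ 1 + ∑ i ∈ univ.erase j, x i := by
  rw [← add_sum_erase _ _ (mem_univ j), if_pos rfl]
  gcongr with i hi
  · nlinarith [hx0 j, hx1 j]
  · rw [if_neg (ne_of_mem_erase hi).symm]
    nlinarith [hx0 i, hx1 i]

theorem sum_erase_sum_indicator_eq [Fintype κ] (y : n → κ) (s : Finset n) (j : κ) :
    ∑ i ∈ univ.erase j, ∑ u ∈ s, (if y u = i then (1 : ℝ) else 0) =
      ∑ u ∈ s, if y u ≠ j then 1 else 0 := by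
  rw [sum_comm]
  refine sum_congr rfl fun u _ => ?_
  simp [sum_ite_eq, mem_erase]

theorem adjacency_mul_label_apply [Fintype n] [DecidableEq n] (nbhd : n → Finset n) (y : n → κ)
    (a : ℝ) (A : Matrix n n ℝ) (C : Matrix n κ ℝ)
    (hA : ∀ v u, A v u = if u ∈ nbhd v then 1 else 0)
    (hC : ∀ v i, C v i = if y v = i then a else 0) (v : n) (i : κ) :
    (A * C) v i = a * ∑ u ∈ nbhd v, if y u = i then 1 else 0 := by
  simp only [Matrix.mul_apply, hA, hC, ite_mul, one_mul, zero_mul]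
  rw [sum_ite_mem, univ_inter, mul_sum]
  simp only [mul_ite, mul_one, mul_zero]

theorem label_prediction_error_bound_general
    (N M c : ℕ) (hM : 0 < M) (hc : N = M * c)
    (y : Fin N → Fin M)
    (N₂ : Fin N → Finset (Fin N))
    (hnb : ∀ v (i : Fin M),
      (∑ u ∈ N₂ v, (if y u = i then (1 : ℝ) else 0)) ≤ (c : ℝ))
    (Y C : Matrix (Fin N) (Fin M) ℝ)
    (A₂ : Matrix (Fin N) (Fin N) ℝ)
    (hY : ∀ v i, Y v i = if y v = i then 1 else 0)
    (hC : ∀ v i, C v i = if y v = i then 1 / (c : ℝ) else 0)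
    (hA₂ : ∀ v u, A₂ v u = if u ∈ N₂ v then 1 else 0) :
    ∑ v, ∑ i, ((Y - A₂ * C) v i) ^ 2 ≤
      (N : ℝ) + ((M : ℝ) ^ 2 / (N : ℝ)) *
        ∑ v, ∑ u ∈ N₂ v, (if y u ≠ y v then (1 : ℝ) else 0) := by
  set h : Fin N → ℝ := fun v => ∑ u ∈ N₂ v, if y u ≠ y v then 1 else 0
  have row : ∀ v, ∑ i, ((Y - A₂ * C) v i) ^ 2 ≤ 1 + 1 / c * h v := by
    intro v
    simp only [Matrix.sub_apply, hY, adjacency_mul_label_apply N₂ y _ A₂ C hA₂ hC, h,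
      one_div_mul_eq_div]
    rw [← sum_erase_sum_indicator_eq, sum_div]
    exact sum_sq_indicator_sub_le _ _ (fun i => by positivity)
      (fun i => div_le_one_of_le₀ (hnb v i) c.cast_nonneg)
  have scale : 1 / (c : ℝ) ≤ (M : ℝ) ^ 2 / N := by
    rw [hc, Nat.cast_mul, sq, mul_div_mul_left _ _ (by positivity)]
    gcongr
    exact_mod_cast hM
  have h0 : 0 ≤ ∑ v, h v := sum_nonneg fun v _ => sum_nonneg fun u _ => by positivity
  calc ∑ v, ∑ i, ((Y - A₂ * C) v i) ^ 2 ≤ ∑ v, (1 + 1 / c * h v) :=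
        sum_le_sum fun v _ => row v
    _ = N + 1 / c * ∑ v, h v := by simp [sum_add_distrib, mul_sum]
    _ ≤ N + (M : ℝ) ^ 2 / N * ∑ v, h v := by gcongr

open Finset in
/-- Key matrix inequality (Eq. 27) of GraphACL Theorem 3:
‖Y − A₂C‖_F² ≤ N + (M²/N)·Σ_v Σ_{u∈N₂(v)} 𝟙[y_u ≠ y_v]. -/
theorem label_prediction_error_bound
    (N M c : ℕ) (hM : 0 < M) (hc : N = M * c) (hN : 0 < N)
    (y : Fin N → Fin M)
    (hbal : ∀ i : Fin M, (Finset.univ.filter (fun v => y v = i)).card = c)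
    (N₂ : Fin N → Finset (Fin N))
    (hnb : ∀ v (i : Fin M),
      (∑ u ∈ N₂ v, (if y u = i then (1 : ℝ) else 0)) ≤ (c : ℝ))
    (Y C : Matrix (Fin N) (Fin M) ℝ)
    (A₂ : Matrix (Fin N) (Fin N) ℝ)
    (hY : ∀ v i, Y v i = if y v = i then 1 else 0)
    (hC : ∀ v i, C v i = if y v = i then 1 / (c : ℝ) else 0)
    (hA₂ : ∀ v u, A₂ v u = if u ∈ N₂ v then 1 else 0) :
    ∑ v, ∑ i, ((Y - A₂ * C) v i) ^ 2 ≤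
      (N : ℝ) + ((M : ℝ) ^ 2 / (N : ℝ)) *
        ∑ v, ∑ u ∈ N₂ v, (if y u ≠ y v then (1 : ℝ) else 0) :=
  label_prediction_error_bound_general N M c hM hc y N₂ hnb Y C A₂ hY hC hA₂
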